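/- arXiv:1903.04056 — 2 statements merged into one kernel-verified Lean document; each statement's English description precedes it below -/
import Mathlib

section
/- Let S = diag(s) with s ∈ R^P having strictly positive entries, and let R be a uniformly random selection of Q of the P coordinates. Then E_R[(P/Q) · (x−μ)^T R (R^T S R)^{-1} R^T (x−μ)] = Σ_{p=1}^P (x_p − μ_p)² / s_p, the dense squared Mahalanobis distance. -/
open Matrix

def colSel {P Q : ℕ} (σ : Fin Q → Fin P) : Matrix (Fin P) (Fin Q) ℝ :=
  fun p q => if p = σ q then 1 else 0


lemma quad {P Q : ℕ} (σ : Fin Q → Fin P) (hσ : Function.Injective σ)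
    (s : Fin P → ℝ) (hs : ∀ p, 0 < s p) (e : Fin P → ℝ) :
    e ⬝ᵥ ((colSel σ * ((colSel σ)ᵀ * Matrix.diagonal s * colSel σ)⁻¹ *
            (colSel σ)ᵀ).mulVec e) = ∑ q, e (σ q) ^ 2 / s (σ q) := by
  have h1 : (colSel σ)ᵀ * Matrix.diagonal s * colSel σ = Matrix.diagonal (fun q => s (σ q)) := by
    ext q q'
    simp only [colSel, Matrix.mul_apply, Matrix.transpose_apply, Matrix.diagonal_apply]
    rcases eq_or_ne q q' with rfl | h
    · simp [Finset.sum_ite_eq, eq_comm]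
    · simp only [h, if_false]
      refine Finset.sum_eq_zero fun p _ => ?_
      rcases eq_or_ne p (σ q) with rfl | hp
      · simp [hσ.ne h, (fun hh => hσ.ne h hh : ¬ σ q = σ q')]
      · simp [hp]
  have h2 : ((colSel σ)ᵀ * Matrix.diagonal s * colSel σ)⁻¹
      = Matrix.diagonal (fun q => (s (σ q))⁻¹) := by
    rw [h1]
    apply Matrix.inv_eq_right_inv
    have hc : ∀ q, s (σ q) * (s (σ q))⁻¹ = 1 := fun q => mul_inv_cancel₀ (hs (σ q)).ne'
    simp [Matrix.diagonal_mul_diagonal, hc]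
  have h3 : e ᵥ* colSel σ = fun q => e (σ q) := by
    ext q
    simp [colSel, Matrix.vecMul, dotProduct]
  have h4 : (colSel σ)ᵀ.mulVec e = fun q => e (σ q) := by
    ext q
    simp [colSel, Matrix.mulVec, dotProduct, Matrix.transpose_apply, eq_comm]
  rw [h2, Matrix.mul_assoc, ← Matrix.mulVec_mulVec, ← Matrix.mulVec_mulVec,
    Matrix.dotProduct_mulVec e (colSel σ), h3, h4]
  simp [Matrix.mulVec_diagonal, dotProduct, div_eq_mul_inv, sq, mul_comm, mul_assoc]

lemma count_swap {P Q : ℕ} (q : Fin Q) (p p' : Fin P) :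
    (Finset.univ.filter fun σ : Fin Q → Fin P => Function.Injective σ ∧ σ q = p).card
    = (Finset.univ.filter fun σ : Fin Q → Fin P => Function.Injective σ ∧ σ q = p').card := by
  apply Finset.card_bij' (fun σ _ => (Equiv.swap p p') ∘ σ) (fun σ _ => (Equiv.swap p p') ∘ σ)
  · intro σ hσ
    simp only [Finset.mem_filter, Finset.mem_univ, true_and] at hσ ⊢
    exact ⟨(Equiv.swap p p').injective.comp hσ.1, by simp [hσ.2]⟩
  · intro σ hσ
    simp only [Finset.mem_filter, Finset.mem_univ, true_and] at hσ ⊢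
    refine ⟨(Equiv.swap p p').injective.comp hσ.1, ?_⟩
    simp [Function.comp, hσ.2]
  · intro σ _; ext q'; simp
  · intro σ _; ext q'; simp

lemma count_mul {P Q : ℕ} (q : Fin Q) (p : Fin P) :
    ((Finset.univ.filter fun σ : Fin Q → Fin P => Function.Injective σ ∧ σ q = p).card : ℝ) * P
    = (Finset.univ.filter fun σ : Fin Q → Fin P => Function.Injective σ).card := by
  have h : (Finset.univ.filter fun σ : Fin Q → Fin P => Function.Injective σ).card
      = ∑ p' : Fin P, (Finset.univ.filter fun σ : Fin Q → Fin P => Function.Injective σ ∧ σ q = p').card := by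
    rw [← Finset.card_biUnion]
    · congr 1
      ext σ
      simp only [Finset.mem_biUnion, Finset.mem_univ, true_and, Finset.mem_filter]
      constructor
      · intro h; exact ⟨σ q, h, rfl⟩
      · rintro ⟨p', h, _⟩; exact h
    · intro a _ b _ hab
      simp only [Finset.disjoint_left, Finset.mem_filter]
      rintro σ ⟨_, _, rfl⟩ ⟨_, _, h2⟩
      exact hab h2
  rw [h]
  push_cast
  have hc : ∀ p' : Fin P,
      ((Finset.univ.filter fun σ : Fin Q → Fin P => Function.Injective σ ∧ σ q = p').card : ℝ)
      = ((Finset.univ.filter fun σ : Fin Q → Fin P => Function.Injective σ ∧ σ q = p).card : ℝ) :=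
    fun p' => by exact_mod_cast congrArg (Nat.cast (R := ℝ)) (count_swap q p' p)
  rw [Finset.sum_congr rfl fun p' _ => hc p']
  simp [Finset.sum_const, Finset.card_univ, mul_comm]

/-- For diagonal positive `S = diag(s)`, the rescaled sparsified squared
Mahalanobis distance is an unbiased estimator of the dense one
`Σ_p (x_p−μ_p)²/s_p`, averaging uniformly over column-selection matrices. -/
theorem sparsified_mahalanobis_unbiased_diagonal {P Q : ℕ} (hQ : 0 < Q) (hQP : Q ≤ P)
    (s : Fin P → ℝ) (hs : ∀ p, 0 < s p) (x μ : Fin P → ℝ) :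
    (∑ σ ∈ Finset.univ.filter (fun σ : Fin Q → Fin P => Function.Injective σ),
        (P / Q : ℝ) * ((x - μ) ⬝ᵥ
          ((colSel σ * ((colSel σ)ᵀ * Matrix.diagonal s * colSel σ)⁻¹ *
            (colSel σ)ᵀ).mulVec (x - μ))))
      / (Finset.univ.filter (fun σ : Fin Q → Fin P => Function.Injective σ)).card
    = ∑ p, (x p - μ p) ^ 2 / s p := by
  classical
  set I := Finset.univ.filter (fun σ : Fin Q → Fin P => Function.Injective σ) with hI
  have hP : (0:ℝ) < P := by exact_mod_cast lt_of_lt_of_le hQ hQP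
  have hQ' : (0:ℝ) < Q := by exact_mod_cast hQ
  have hNne : I.Nonempty := ⟨Fin.castLE hQP, by simp [hI, Fin.castLE_injective hQP]⟩
  have hN : (0:ℝ) < I.card := by exact_mod_cast Finset.card_pos.mpr hNne
  have step1 : ∀ σ ∈ I,
      (P / Q : ℝ) * ((x - μ) ⬝ᵥ
        ((colSel σ * ((colSel σ)ᵀ * Matrix.diagonal s * colSel σ)⁻¹ *
          (colSel σ)ᵀ).mulVec (x - μ)))
      = (P / Q : ℝ) * ∑ q, (x (σ q) - μ (σ q)) ^ 2 / s (σ q) := by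
    intro σ hσ
    have hσi : Function.Injective σ := (Finset.mem_filter.mp hσ).2
    rw [quad σ hσi s hs (x - μ)]
    simp [Pi.sub_apply]
  rw [Finset.sum_congr rfl step1, ← Finset.mul_sum, Finset.sum_comm]
  have inner : ∀ q : Fin Q,
      (∑ σ ∈ I, (x (σ q) - μ (σ q)) ^ 2 / s (σ q))
      = (I.card : ℝ) / P * ∑ p, (x p - μ p) ^ 2 / s p := by
    intro q
    rw [← Finset.sum_fiberwise' I (fun σ => σ q) (fun p => (x p - μ p) ^ 2 / s p),
      Finset.mul_sum]
    refine Finset.sum_congr rfl fun p _ => ?_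
    rw [Finset.sum_const, nsmul_eq_mul]
    have hfil : I.filter (fun σ => σ q = p)
        = Finset.univ.filter (fun σ : Fin Q → Fin P => Function.Injective σ ∧ σ q = p) := by
      rw [hI, Finset.filter_filter]
    have hc := count_mul q p
    rw [hfil]
    rw [← hc]
    field_simp
  rw [Finset.sum_congr rfl fun q _ => inner q, Finset.sum_const, nsmul_eq_mul,
    Finset.card_univ, Fintype.card_fin]
  field_simp
end

section
/- For diagonal covariance S = diag(s) with s > 0 entrywise and column-selection matrices R_i, equation Σ_i r_i Λ_i = Σ_i r_i Λ_i M_i Λ_i restricted to diagonal entries yields: for each coordinate p, s_p · Σ_i r_i 1{p selected by R_i} = Σ_i r_i 1{p selected by R_i} (x_{i,p} − μ_p)², so s_p = (Σ_{i: p∈R_i} r_i (x_{i,p} − μ_p)²) / (Σ_{i: p∈R_i} r_i) whenever the denominator is positive. -/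
open Matrix

lemma lam_eq {P Q : ℕ} (σ : Fin Q → Fin P) (hσ : Function.Injective σ)
    (s : Fin P → ℝ) (hs : ∀ p, 0 < s p) :
    colSel σ * ((colSel σ)ᵀ * Matrix.diagonal s * colSel σ)⁻¹ * (colSel σ)ᵀ
      = Matrix.diagonal (fun p => if p ∈ Finset.univ.image σ then (s p)⁻¹ else 0) := by
  have h1 : (colSel σ)ᵀ * Matrix.diagonal s * colSel σ
      = Matrix.diagonal (fun q => s (σ q)) := by
    rw [Matrix.mul_assoc]
    ext q q'
    simp only [Matrix.mul_apply, Matrix.diagonal_mul, Matrix.transpose_apply, colSel,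
      ite_mul, one_mul, zero_mul, Finset.sum_ite_eq' Finset.univ (σ q),
      Finset.mem_univ, if_true, Matrix.diagonal_apply, hσ.eq_iff]
    by_cases h : q = q'
    · simp [h, eq_comm]
    · simp [h, hσ.ne h]
  have h2 : (Matrix.diagonal fun q => s (σ q))⁻¹
      = Matrix.diagonal (fun q => (s (σ q))⁻¹) := by
    apply Matrix.inv_eq_right_inv
    rw [Matrix.diagonal_mul_diagonal]
    convert Matrix.diagonal_one with q
    exact mul_inv_cancel₀ (ne_of_gt (hs _))
  rw [h1, h2]
  ext a b
  simp only [Matrix.mul_apply, Matrix.transpose_apply, Matrix.diagonal_apply, colSel,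
    ite_mul, one_mul, zero_mul, mul_ite, mul_one, mul_zero, Finset.sum_ite_eq',
    Finset.mem_univ, if_true]
  by_cases hab : a = b
  · subst hab
    by_cases hmem : a ∈ Finset.univ.image σ
    · obtain ⟨q0, -, hq0⟩ := Finset.mem_image.mp hmem
      rw [Finset.sum_eq_single q0]
      · simp [hq0.symm, hmem]
      · intro c _ hc
        have : a ≠ σ c := fun h => hc (hσ (h.symm.trans hq0.symm))
        simp [this]
      · simp
    · rw [if_pos rfl, if_neg hmem]
      refine Finset.sum_eq_zero fun c _ => ?_
      have : a ≠ σ c := fun h => hmem (Finset.mem_image.mpr ⟨c, Finset.mem_univ c, h.symm⟩)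
      simp [this]
  · rw [if_neg hab]
    refine Finset.sum_eq_zero fun c _ => ?_
    split_ifs with h1 h2
    · exact absurd (h2.trans h1.symm) hab
    · rfl
    · rfl

/-- For diagonal covariance `S = diag(s)` and column-selection matrices `R_i`,
the matrix equation `Σ_i r_i Λ_i = Σ_i r_i Λ_i M_i Λ_i` restricted to diagonal
entries yields `s_p · Σ_{i : p selected} r_i = Σ_{i : p selected} r_i (x_{i,p} − μ_p)²`,
hence `s_p = (Σ_{i : p∈R_i} r_i (x_{i,p} − μ_p)²)/(Σ_{i : p∈R_i} r_i)` whenever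
the denominator is positive. -/
theorem diagonal_covariance_mle {P Q n : ℕ}
    (σ : Fin n → Fin Q → Fin P) (hσ : ∀ i, Function.Injective (σ i))
    (s : Fin P → ℝ) (hs : ∀ p, 0 < s p)
    (r : Fin n → ℝ) (hr : ∀ i, 0 ≤ r i)
    (x : Fin n → Fin P → ℝ) (μ : Fin P → ℝ)
    (heq : ∑ i, r i •
        (colSel (σ i) * ((colSel (σ i))ᵀ * Matrix.diagonal s * colSel (σ i))⁻¹ *
          (colSel (σ i))ᵀ)
      = ∑ i, r i •
        ((colSel (σ i) * ((colSel (σ i))ᵀ * Matrix.diagonal s * colSel (σ i))⁻¹ *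
            (colSel (σ i))ᵀ) *
          vecMulVec (x i - μ) (x i - μ) *
          (colSel (σ i) * ((colSel (σ i))ᵀ * Matrix.diagonal s * colSel (σ i))⁻¹ *
            (colSel (σ i))ᵀ)))
    (p : Fin P) :
    (s p * (∑ i, if p ∈ Finset.univ.image (σ i) then r i else 0)
        = ∑ i, if p ∈ Finset.univ.image (σ i) then r i * (x i p - μ p) ^ 2 else 0) ∧
      (0 < (∑ i, if p ∈ Finset.univ.image (σ i) then r i else 0) →
        s p = (∑ i, if p ∈ Finset.univ.image (σ i) then r i * (x i p - μ p) ^ 2 else 0) /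
              (∑ i, if p ∈ Finset.univ.image (σ i) then r i else 0)) := by
  have hlam : ∀ i, colSel (σ i) * ((colSel (σ i))ᵀ * Matrix.diagonal s * colSel (σ i))⁻¹ *
      (colSel (σ i))ᵀ
      = Matrix.diagonal (fun a => if a ∈ Finset.univ.image (σ i) then (s a)⁻¹ else 0) :=
    fun i => lam_eq (σ i) (hσ i) s hs
  simp only [hlam] at heq
  have H := Matrix.ext_iff.2 heq p p
  simp only [Matrix.sum_apply, Matrix.smul_apply, smul_eq_mul, Matrix.mul_diagonal,
    Matrix.diagonal_mul, Matrix.vecMulVec_apply, Pi.sub_apply, Matrix.diagonal_apply_eq] at H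
  set L := ∑ i, if p ∈ Finset.univ.image (σ i) then r i else 0 with hL
  set R := ∑ i, if p ∈ Finset.univ.image (σ i) then r i * (x i p - μ p) ^ 2 else 0 with hR
  have spne : s p ≠ 0 := (hs p).ne'
  have hLe : (∑ i, r i * if p ∈ Finset.univ.image (σ i) then (s p)⁻¹ else 0)
      = (s p)⁻¹ * L := by
    rw [hL, Finset.mul_sum]
    refine Finset.sum_congr rfl fun i _ => ?_
    split_ifs <;> ring
  have hRe : (∑ i, r i * ((if p ∈ Finset.univ.image (σ i) then (s p)⁻¹ else 0) *
        ((x i p - μ p) * (x i p - μ p)) *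
        (if p ∈ Finset.univ.image (σ i) then (s p)⁻¹ else 0)))
      = (s p)⁻¹ * ((s p)⁻¹ * R) := by
    rw [hR, Finset.mul_sum, Finset.mul_sum]
    refine Finset.sum_congr rfl fun i _ => ?_
    split_ifs <;> ring
  rw [hLe, hRe] at H
  have hkey : s p * L = R := by
    have h3 : L = (s p)⁻¹ * R := mul_left_cancel₀ (inv_ne_zero spne) H
    rw [h3, ← mul_assoc, mul_inv_cancel₀ spne, one_mul]
  exact ⟨hkey, fun hpos => by rw [eq_div_iff hpos.ne', hkey]⟩
end
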